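/- arXiv:1709.03740 — 5 statements merged into one kernel-verified Lean document; each statement's English description precedes it below -/
import Mathlib

section
/- For every n ≥ 2, the algebra ℰ_n(u) is finite dimensional as a vector space over K = ℂ(u). -/
noncomputable section

open FreeAlgebra

/-- The base field `K = ℂ(u)`, the field of rational functions over `ℂ`. -/
abbrev K : Type := RatFunc ℂ

/-- The distinguished element `u` of `K = ℂ(u)`. -/
def u : K := RatFunc.X

/-- Generators of the algebra `ℰ_n(u)`: `T i` and `E i` for `i` ranging over `n - 1` indices. -/
inductive Gen (n : ℕ) : Type
  | T : Fin (n - 1) → Gen n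
  | E : Fin (n - 1) → Gen n

/-- The free `K`-algebra on the generators. -/
abbrev FA (n : ℕ) : Type := FreeAlgebra K (Gen n)

def fT {n : ℕ} (i : Fin (n - 1)) : FA n := ι K (Gen.T i)
def fE {n : ℕ} (i : Fin (n - 1)) : FA n := ι K (Gen.E i)

/-- The defining relations of `ℰ_n(u)`. -/
inductive EnRel (n : ℕ) : FA n → FA n → Prop
  | TTfar {i j : Fin (n - 1)} : 1 < Nat.dist i j →
      EnRel n (fT i * fT j) (fT j * fT i)
  | braid {i j : Fin (n - 1)} : Nat.dist i j = 1 →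
      EnRel n (fT i * fT j * fT i) (fT j * fT i * fT j)
  | Eidem (i : Fin (n - 1)) : EnRel n (fE i * fE i) (fE i)
  | EE (i j : Fin (n - 1)) : EnRel n (fE i * fE j) (fE j * fE i)
  | ET (i : Fin (n - 1)) : EnRel n (fE i * fT i) (fT i * fE i)
  | ETfar {i j : Fin (n - 1)} : 1 < Nat.dist i j →
      EnRel n (fE i * fT j) (fT j * fE i)
  | ETT {i j : Fin (n - 1)} : Nat.dist i j = 1 →
      EnRel n (fE j * (fT i * fT j)) (fT i * fT j * fE i)
  | EET {i j : Fin (n - 1)} : Nat.dist i j = 1 →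
      EnRel n (fE i * fE j * fT j) (fE i * fT j * fE i)
  | ETE {i j : Fin (n - 1)} : Nat.dist i j = 1 →
      EnRel n (fE i * fT j * fE i) (fT j * (fE i * fE j))
  | Tsq (i : Fin (n - 1)) :
      EnRel n (fT i * fT i) (1 + (u⁻¹ - 1) • (fE i * (1 - fT i)))

/-- The algebra `ℰ_n(u)`, as a quotient of the free algebra by the defining relations. -/
abbrev En (n : ℕ) : Type := RingQuot (EnRel n)

/-- The generator `T i` of `ℰ_n(u)`. -/
def T {n : ℕ} (i : Fin (n - 1)) : En n := RingQuot.mkAlgHom K (EnRel n) (fT i)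

/-- The generator `E i` of `ℰ_n(u)`. -/
def E {n : ℕ} (i : Fin (n - 1)) : En n := RingQuot.mkAlgHom K (EnRel n) (fE i)

/-!
Let `A m` be the subalgebra generated by `T i, E i` for `i < m`, and `B m` the span of
`1, T m, E m, E m * T m`. Then `A (m + 1) = A m * B m * A m` as subspaces, so by induction every
`A m` is finite dimensional, and `A (n - 1)` is the whole algebra.

For the inclusion `⊆` it suffices that `A m * B m * A m` is stable under left multiplication by
`g = T m, E m`. Writing `A m = A (m - 1) * B (m - 1) * A (m - 1)` and using that `A (m - 1)`
commutes with `T m, E m`, this reduces to `g * y * x ∈ A m * B m * A m` for `y ∈ B (m - 1)` and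
`x ∈ B m`: finitely many products, each rewritten into that form by the braid-tie relations
and the invertibility of `T (m - 1)`.
-/

section

variable {R A : Type*} [CommRing R] [Ring A] [Algebra R A]

theorem mul_eq_one_of_mul_self_eq {t e : A} {c d : R} (he : e * e = e) (hte : e * t = t * e)
    (ht : t * t = 1 + c • (e * (1 - t))) (hd : d * (1 + c) = c) :
    t * (t + d • (e * (1 - t))) = 1 ∧ (t + d • (e * (1 - t))) * t = 1 := by
  have key : e * (t - t * t) = -((1 + c) • (e * (1 - t))) := by
    rw [ht, mul_sub, mul_add, mul_one, mul_smul_comm, ← mul_assoc, he, add_smul, one_smul]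
    noncomm_ring
  constructor
  · rw [mul_add, mul_smul_comm, ← mul_assoc, ← hte, mul_assoc, mul_sub t, mul_one, key, ht,
      smul_neg, smul_smul, hd]
    abel
  · rw [add_mul, smul_mul_assoc, mul_assoc, sub_mul, one_mul, key, ht, smul_neg, smul_smul, hd]
    abel

theorem mul_mul_mem_of_mem_span {s : Set A} {V : Submodule R A} {a b y : A}
    (hs : ∀ x ∈ s, a * x * b ∈ V) (hy : y ∈ Submodule.span R s) : a * y * b ∈ V := by
  have := (Submodule.map_span_le (LinearMap.mulLeft R a ∘ₗ LinearMap.mulRight R b) s V).2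
    (by simpa [mul_assoc] using hs) (Submodule.mem_map_of_mem hy)
  simpa [mul_assoc] using this

theorem mul_mem_of_mem_span {s : Set A} {V : Submodule R A} {a y : A}
    (hs : ∀ x ∈ s, a * x ∈ V) (hy : y ∈ Submodule.span R s) : a * y ∈ V := by
  simpa using mul_mul_mem_of_mem_span (b := 1) (by simpa using hs) hy

theorem Algebra.toSubmodule_adjoin_le_of_mul_mem {s : Set A} {V : Submodule R A} (h1 : 1 ∈ V)
    (hs : ∀ g ∈ s, ∀ v ∈ V, g * v ∈ V) :
    Subalgebra.toSubmodule (Algebra.adjoin R s) ≤ V := by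
  intro z hz
  suffices ∀ v ∈ V, z * v ∈ V by simpa using this 1 h1
  induction hz using Algebra.adjoin_induction with
  | mem g hg => exact hs g hg
  | algebraMap r => exact fun v hv => by simpa [Algebra.smul_def] using V.smul_mem r hv
  | add x y _ _ hx hy => exact fun v hv => by simpa [add_mul] using V.add_mem (hx v hv) (hy v hv)
  | mul x y _ _ hx hy => exact fun v hv => by simpa [mul_assoc] using hx _ (hy v hv)

def sandwich (C : Subalgebra R A) (W : Submodule R A) : Submodule R A :=
  Subalgebra.toSubmodule C * W * Subalgebra.toSubmodule C

variable {C : Subalgebra R A} {W : Submodule R A}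

theorem mul_mul_mem_sandwich {a w b : A} (ha : a ∈ C) (hw : w ∈ W) (hb : b ∈ C) :
    a * w * b ∈ sandwich C W :=
  Submodule.mul_mem_mul (Submodule.mul_mem_mul ha hw) hb

theorem mem_sandwich_of_mem {w : A} (hw : w ∈ W) : w ∈ sandwich C W := by
  simpa using mul_mul_mem_sandwich (one_mem C) hw (one_mem C)

theorem mul_mem_sandwich_left {a v : A} (ha : a ∈ C) (hv : v ∈ sandwich C W) :
    a * v ∈ sandwich C W := by
  have := Submodule.mul_mem_mul (show a ∈ Subalgebra.toSubmodule C from ha) hv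
  rwa [sandwich, ← mul_assoc, ← mul_assoc, (Subalgebra.isIdempotentElem_toSubmodule C).eq]
    at this

theorem mul_mem_sandwich_right {v b : A} (hv : v ∈ sandwich C W) (hb : b ∈ C) :
    v * b ∈ sandwich C W := by
  have := Submodule.mul_mem_mul hv (show b ∈ Subalgebra.toSubmodule C from hb)
  rwa [sandwich, mul_assoc _ (Subalgebra.toSubmodule C),
    (Subalgebra.isIdempotentElem_toSubmodule C).eq] at this

theorem sandwich_le {D : Subalgebra R A} (hC : C ≤ D) (hW : W ≤ Subalgebra.toSubmodule D) :
    sandwich C W ≤ Subalgebra.toSubmodule D := by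
  have hCD : Subalgebra.toSubmodule C ≤ Subalgebra.toSubmodule D := hC
  have hD := (Subalgebra.isIdempotentElem_toSubmodule D).eq
  calc sandwich C W
      ≤ Subalgebra.toSubmodule D * Subalgebra.toSubmodule D * Subalgebra.toSubmodule D :=
        mul_le_mul' (mul_le_mul' hCD hW) hCD
    _ = Subalgebra.toSubmodule D := by rw [hD, hD]

theorem mul_mem_sandwich_of_forall {g : A}
    (h : ∀ a ∈ C, ∀ w ∈ W, g * (a * w) ∈ sandwich C W)
    {v : A} (hv : v ∈ sandwich C W) : g * v ∈ sandwich C W := by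
  refine Submodule.mul_induction_on hv (fun x hx b hb => ?_) (fun x y hx hy => ?_)
  · rw [← mul_assoc]
    refine mul_mem_sandwich_right (Submodule.mul_induction_on hx (fun a ha w hw => h a ha w hw)
      (fun x y hx hy => ?_)) hb
    rw [mul_add]; exact add_mem hx hy
  · rw [mul_add]; exact add_mem hx hy

theorem mul_mul_mem_sandwich_of_commute {C' : Subalgebra R A} {W' : Submodule R A} {g : A}
    (hC : Subalgebra.toSubmodule C ≤ sandwich C' W') (hC' : C' ≤ C)
    (hg : ∀ p ∈ C', Commute g p) (hW : ∀ p ∈ C', ∀ w ∈ W, Commute p w)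
    (hcore : ∀ y ∈ W', ∀ w ∈ W, g * (y * w) ∈ sandwich C W)
    {a w : A} (ha : a ∈ C) (hw : w ∈ W) : g * (a * w) ∈ sandwich C W := by
  refine Submodule.mul_induction_on (hC ha) (fun x hx q hq => ?_) (fun x y hx hy => ?_)
  · refine Submodule.mul_induction_on hx (fun p hp y hy => ?_) (fun x y hx hy => ?_)
    · have : g * (p * y * q * w) = p * (g * (y * w)) * q := by
        simp only [mul_assoc]
        rw [(hW q hq w hw).eq, ← mul_assoc g p, (hg p hp).eq]
        simp only [mul_assoc]
      rw [this]
      exact mul_mem_sandwich_right (mul_mem_sandwich_left (hC' hp) (hcore y hy w hw)) (hC' hq)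
    · simpa only [add_mul, mul_add] using add_mem hx hy
  · simpa only [add_mul, mul_add] using add_mem hx hy

end

namespace En

variable {n : ℕ} {i j : Fin (n - 1)}

theorem T_mul_T_of_far (h : 1 < Nat.dist i j) : T i * T j = T j * T i := by
  simpa only [T, E, map_mul] using RingQuot.mkAlgHom_rel K (EnRel.TTfar h)

theorem T_braid (h : Nat.dist i j = 1) : T i * T j * T i = T j * T i * T j := by
  simpa only [T, E, map_mul] using RingQuot.mkAlgHom_rel K (EnRel.braid h)

theorem E_mul_E_self (i : Fin (n - 1)) : E i * E i = E i := by
  simpa only [T, E, map_mul] using RingQuot.mkAlgHom_rel K (EnRel.Eidem i)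

theorem E_mul_E_comm (i j : Fin (n - 1)) : E i * E j = E j * E i := by
  simpa only [T, E, map_mul] using RingQuot.mkAlgHom_rel K (EnRel.EE i j)

theorem E_mul_T_self (i : Fin (n - 1)) : E i * T i = T i * E i := by
  simpa only [T, E, map_mul] using RingQuot.mkAlgHom_rel K (EnRel.ET i)

theorem E_mul_T_of_far (h : 1 < Nat.dist i j) : E i * T j = T j * E i := by
  simpa only [T, E, map_mul] using RingQuot.mkAlgHom_rel K (EnRel.ETfar h)

theorem E_mul_T_mul_T (h : Nat.dist i j = 1) : E j * T i * T j = T i * T j * E i := by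
  simpa only [T, E, map_mul, mul_assoc] using RingQuot.mkAlgHom_rel K (EnRel.ETT h)

theorem E_mul_E_mul_T (h : Nat.dist i j = 1) : E i * E j * T j = E i * T j * E i := by
  simpa only [T, E, map_mul] using RingQuot.mkAlgHom_rel K (EnRel.EET h)

theorem E_mul_T_mul_E (h : Nat.dist i j = 1) : E i * T j * E i = T j * E i * E j := by
  simpa only [T, E, map_mul, mul_assoc] using RingQuot.mkAlgHom_rel K (EnRel.ETE h)

theorem T_mul_T_self (i : Fin (n - 1)) : T i * T i = 1 + (u⁻¹ - 1) • (E i * (1 - T i)) := by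
  simpa only [T, E, map_mul, map_add, map_one, map_smul, map_sub] using
    RingQuot.mkAlgHom_rel K (EnRel.Tsq i)

def Tinv (i : Fin (n - 1)) : En n := T i + (1 - u) • (E i * (1 - T i))

theorem T_mul_Tinv_and_Tinv_mul_T (i : Fin (n - 1)) : T i * Tinv i = 1 ∧ Tinv i * T i = 1 := by
  refine mul_eq_one_of_mul_self_eq (E_mul_E_self i) (E_mul_T_self i) (T_mul_T_self i) ?_
  have hu : u ≠ 0 := RatFunc.X_ne_zero
  field_simp
  ring

theorem T_mul_Tinv (i : Fin (n - 1)) : T i * Tinv i = 1 := (T_mul_Tinv_and_Tinv_mul_T i).1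

theorem Tinv_mul_T (i : Fin (n - 1)) : Tinv i * T i = 1 := (T_mul_Tinv_and_Tinv_mul_T i).2

theorem Tinv_mem {A : Subalgebra K (En n)} (hT : T i ∈ A) (hE : E i ∈ A) : Tinv i ∈ A :=
  add_mem hT (A.smul_mem (mul_mem hE (sub_mem (one_mem A) hT)) _)

def B (j : Fin (n - 1)) : Submodule K (En n) := Submodule.span K {1, T j, E j, E j * T j}

theorem one_mem_B (j : Fin (n - 1)) : (1 : En n) ∈ B j := Submodule.subset_span (by simp)
theorem T_mem_B (j : Fin (n - 1)) : T j ∈ B j := Submodule.subset_span (by simp)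
theorem E_mem_B (j : Fin (n - 1)) : E j ∈ B j := Submodule.subset_span (by simp)
theorem E_mul_T_mem_B (j : Fin (n - 1)) : E j * T j ∈ B j := Submodule.subset_span (by simp)

section

variable {V : Submodule K (En n)} {a b x : En n}

theorem mul_mem_of_mem_B (h1 : a ∈ V) (hT : a * T j ∈ V) (hE : a * E j ∈ V)
    (hET : a * (E j * T j) ∈ V) (hx : x ∈ B j) : a * x ∈ V :=
  mul_mem_of_mem_span (by simp [h1, hT, hE, hET]) hx

theorem mul_mul_mem_of_mem_B (h1 : a * b ∈ V) (hT : a * T j * b ∈ V) (hE : a * E j * b ∈ V)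
    (hET : a * (E j * T j) * b ∈ V) (hx : x ∈ B j) : a * x * b ∈ V :=
  mul_mul_mem_of_mem_span (by simp [h1, hT, hE, hET]) hx

end

theorem T_mul_T_mem_B (j : Fin (n - 1)) : T j * T j ∈ B j := by
  rw [T_mul_T_self, mul_sub, mul_one, smul_sub]
  exact add_mem (one_mem_B j)
    (sub_mem (Submodule.smul_mem _ _ (E_mem_B j)) (Submodule.smul_mem _ _ (E_mul_T_mem_B j)))

theorem T_mul_mem_B {x : En n} (hx : x ∈ B j) : T j * x ∈ B j := by
  refine mul_mem_of_mem_B ?_ (T_mul_T_mem_B j) ?_ ?_ hx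
  · simpa using T_mem_B j
  · rw [← E_mul_T_self]; exact E_mul_T_mem_B j
  · rw [← mul_assoc, ← E_mul_T_self, mul_assoc, T_mul_T_self, mul_add, mul_one, mul_smul_comm,
      ← mul_assoc, E_mul_E_self]
    exact add_mem (E_mem_B j) (Submodule.smul_mem _ _ (by
      rw [mul_sub, mul_one]; exact sub_mem (E_mem_B j) (E_mul_T_mem_B j)))

theorem E_mul_mem_B {x : En n} (hx : x ∈ B j) : E j * x ∈ B j := by
  refine mul_mem_of_mem_B ?_ (E_mul_T_mem_B j) ?_ ?_ hx
  · simpa using E_mem_B j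
  · rw [E_mul_E_self]; exact E_mem_B j
  · rw [← mul_assoc, E_mul_E_self]; exact E_mul_T_mem_B j

theorem commute_of_mem_B {q x : En n} (hT : Commute q (T j)) (hE : Commute q (E j))
    (hx : x ∈ B j) : Commute q x := by
  induction hx using Submodule.span_induction with
  | mem x hx =>
    rcases hx with rfl | rfl | rfl | rfl
    exacts [Commute.one_right q, hT, hE, hE.mul_right hT]
  | zero => exact Commute.zero_right q
  | add x y _ _ hx hy => exact hx.add_right hy
  | smul c x _ hx => exact hx.smul_right c

section Core

variable {A : Subalgebra K (En n)} (h : Nat.dist i j = 1) (hT : T i ∈ A) (hE : E i ∈ A)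
include h hT hE

theorem E_mul_T_mul_mem {x : En n} (hx : x ∈ B j) : E j * T i * x ∈ sandwich A (B j) := by
  have h' : Nat.dist j i = 1 := Nat.dist_comm j i ▸ h
  refine mul_mem_of_mem_B ?_ ?_ ?_ ?_ hx
  · simpa using mul_mul_mem_sandwich (one_mem A) (E_mem_B j) hT
  · rw [E_mul_T_mul_T h]; exact mul_mul_mem_sandwich hT (T_mem_B j) hE
  · rw [E_mul_T_mul_E h']; exact mul_mul_mem_sandwich hT (E_mem_B j) hE
  · rw [← mul_assoc, E_mul_T_mul_E h', mul_assoc (T i), E_mul_E_comm j i, ← mul_assoc,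
      mul_assoc]
    simpa using mul_mul_mem_sandwich (mul_mem hT hE) (E_mul_T_mem_B j) (one_mem A)

theorem T_mul_T_mul_mem {x : En n} (hx : x ∈ B j) : T j * T i * x ∈ sandwich A (B j) := by
  have h' : Nat.dist j i = 1 := Nat.dist_comm j i ▸ h
  refine mul_mem_of_mem_B ?_ ?_ ?_ ?_ hx
  · simpa using mul_mul_mem_sandwich (one_mem A) (T_mem_B j) hT
  · rw [← T_braid h]; exact mul_mul_mem_sandwich hT (T_mem_B j) hT
  · rw [← E_mul_T_mul_T h']; exact mul_mul_mem_sandwich hE (T_mem_B j) hT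
  · rw [← mul_assoc, ← E_mul_T_mul_T h', mul_assoc (E i), mul_assoc (E i), ← T_braid h,
      ← mul_assoc, ← mul_assoc]
    exact mul_mul_mem_sandwich (mul_mem hE hT) (T_mem_B j) hT

theorem T_mul_E_mul_mem {x : En n} (hx : x ∈ B j) : T j * E i * x ∈ sandwich A (B j) := by
  have key : T j * E i = Tinv i * (E j * T i * T j) := by
    rw [E_mul_T_mul_T h, ← mul_assoc, ← mul_assoc, Tinv_mul_T i, one_mul]
  rw [key, mul_assoc, mul_assoc (E j * T i)]
  exact mul_mem_sandwich_left (Tinv_mem hT hE) (E_mul_T_mul_mem h hT hE (T_mul_mem_B hx))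

theorem T_mul_E_mul_T_mul_E_mem : T j * (E i * T i) * E j ∈ sandwich A (B j) := by
  have h' : Nat.dist j i = 1 := Nat.dist_comm j i ▸ h
  have key : T j * (E i * T i) * E j = E i * T j * (T i * E i) := by
    rw [E_mul_T_self, mul_assoc, mul_assoc, E_mul_E_comm i j]
    simp only [← mul_assoc]
    rw [← E_mul_T_mul_T h', mul_assoc _ (T i)]
  rw [key]
  exact mul_mul_mem_sandwich hE (T_mem_B j) (mul_mem hT hE)

theorem T_mul_E_mul_T_mul_mem {x : En n} (hx : x ∈ B j) :
    T j * (E i * T i) * x ∈ sandwich A (B j) := by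
  have h' : Nat.dist j i = 1 := Nat.dist_comm j i ▸ h
  refine mul_mem_of_mem_B ?_ ?_ (T_mul_E_mul_T_mul_E_mem h hT hE) ?_ hx
  · simpa using mul_mul_mem_sandwich (one_mem A) (T_mem_B j) (mul_mem hE hT)
  · -- The one product that needs the quadratic relation: pushing `E i` past `T j` costs a
    -- `Tinv i`, and the braid relation then produces `T i * T i`.
    have hET : E i * T j = T j * T i * E j * Tinv i := by
      rw [← E_mul_T_mul_T h', mul_assoc _ (T i), T_mul_Tinv i, mul_one]
    have key : T j * (E i * T i) * T j = T i * (T j * (T i * T i) * E j) * Tinv i := by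
      rw [E_mul_T_self, ← mul_assoc, mul_assoc _ (E i), hET]
      simp only [← mul_assoc]
      rw [T_braid h]
    have hsq : T j * (T i * T i) * E j ∈ sandwich A (B j) := by
      refine mul_mul_mem_of_mem_B ?_ (T_mul_T_mul_mem h hT hE (E_mem_B j))
        (T_mul_E_mul_mem h hT hE (E_mem_B j)) (T_mul_E_mul_T_mul_E_mem h hT hE) (T_mul_T_mem_B i)
      simpa using mul_mul_mem_sandwich (one_mem A) (T_mul_mem_B (E_mem_B j)) (one_mem A)
    rw [key]
    exact mul_mem_sandwich_right (mul_mem_sandwich_left hT hsq) (Tinv_mem hT hE)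
  · have key : T j * (E i * T i) * (E j * T j) = T i * (T j * (E i * T i) * E j) := by
      rw [E_mul_T_self]
      simp only [← mul_assoc]
      rw [mul_assoc (T j * T i) (E i), mul_assoc (T j * T i), E_mul_E_mul_T h, E_mul_T_mul_E h]
      simp only [← mul_assoc]
      rw [T_braid h]
    rw [key]
    exact mul_mem_sandwich_left hT (T_mul_E_mul_T_mul_E_mem h hT hE)

theorem T_mul_mul_mem {y x : En n} (hy : y ∈ B i) (hx : x ∈ B j) :
    T j * y * x ∈ sandwich A (B j) :=
  mul_mul_mem_of_mem_B (mem_sandwich_of_mem (T_mul_mem_B hx)) (T_mul_T_mul_mem h hT hE hx)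
    (T_mul_E_mul_mem h hT hE hx) (T_mul_E_mul_T_mul_mem h hT hE hx) hy

theorem E_mul_mul_mem {y x : En n} (hy : y ∈ B i) (hx : x ∈ B j) :
    E j * y * x ∈ sandwich A (B j) := by
  refine mul_mul_mem_of_mem_B (mem_sandwich_of_mem (E_mul_mem_B hx)) (E_mul_T_mul_mem h hT hE hx)
    ?_ ?_ hy
  · rw [E_mul_E_comm, mul_assoc]
    exact mul_mem_sandwich_left hE (mem_sandwich_of_mem (E_mul_mem_B hx))
  · rw [← mul_assoc, E_mul_E_comm j i, mul_assoc (E i), mul_assoc (E i)]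
    exact mul_mem_sandwich_left hE (E_mul_T_mul_mem h hT hE hx)

end Core

def tower (n m : ℕ) : Subalgebra K (En n) :=
  Algebra.adjoin K {x | ∃ i : Fin (n - 1), (i : ℕ) < m ∧ (x = T i ∨ x = E i)}

theorem T_mem_tower {m : ℕ} (hi : (i : ℕ) < m) : T i ∈ tower n m :=
  Algebra.subset_adjoin ⟨i, hi, Or.inl rfl⟩

theorem E_mem_tower {m : ℕ} (hi : (i : ℕ) < m) : E i ∈ tower n m :=
  Algebra.subset_adjoin ⟨i, hi, Or.inr rfl⟩

theorem tower_mono {m m' : ℕ} (h : m ≤ m') : tower n m ≤ tower n m' :=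
  Algebra.adjoin_mono fun _ ⟨i, hi, hx⟩ => ⟨i, hi.trans_le h, hx⟩

theorem tower_zero : tower n 0 = ⊥ := by
  simp [tower]

theorem tower_eq_top : tower n (n - 1) = ⊤ := by
  rw [eq_top_iff]
  rintro x -
  obtain ⟨y, rfl⟩ := RingQuot.mkAlgHom_surjective K (EnRel n) x
  induction y using FreeAlgebra.induction with
  | grade0 r => rw [AlgHom.commutes]; exact algebraMap_mem _ r
  | grade1 g =>
    cases g with
    | T i => exact T_mem_tower i.isLt
    | E i => exact E_mem_tower i.isLt
  | mul a b ha hb => rw [map_mul]; exact mul_mem ha hb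
  | add a b ha hb => rw [map_add]; exact add_mem ha hb

theorem commute_of_mem_tower {m : ℕ} (hm : m < j) {q : En n} (hq : q ∈ tower n m) :
    Commute (T j) q ∧ Commute (E j) q := by
  have hgen : ∀ k : Fin (n - 1), (k : ℕ) < m → Commute (T j) (T k) ∧ Commute (T j) (E k) ∧
      Commute (E j) (T k) ∧ Commute (E j) (E k) := by
    intro k hk
    have hjk : 1 < Nat.dist j k := by unfold Nat.dist; omega
    have hkj : 1 < Nat.dist k j := Nat.dist_comm j k ▸ hjk
    exact ⟨T_mul_T_of_far hjk, (E_mul_T_of_far hkj).symm, E_mul_T_of_far hjk, E_mul_E_comm j k⟩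
  constructor <;> refine Algebra.commute_of_mem_adjoin_of_forall_mem_commute hq ?_ <;>
    rintro _ ⟨k, hk, rfl | rfl⟩ <;> simp [hgen k hk]

section Step

variable {g : En n}

theorem mul_mem_sandwich_tower_zero (hj : (j : ℕ) = 0) (hg : g = T j ∨ g = E j) {v : En n}
    (hv : v ∈ sandwich (tower n j) (B j)) : g * v ∈ sandwich (tower n j) (B j) := by
  refine mul_mem_sandwich_of_forall (fun a ha w hw => ?_) hv
  rw [hj, tower_zero] at ha
  obtain ⟨r, rfl⟩ := Algebra.mem_bot.1 ha
  rw [← Algebra.smul_def, mul_smul_comm]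
  refine Submodule.smul_mem _ r (mem_sandwich_of_mem ?_)
  rcases hg with rfl | rfl
  exacts [T_mul_mem_B hw, E_mul_mem_B hw]

theorem mul_mem_sandwich_tower_succ (hij : (i : ℕ) + 1 = j)
    (htower : Subalgebra.toSubmodule (tower n (i + 1)) = sandwich (tower n i) (B i))
    (hg : g = T j ∨ g = E j) {v : En n} (hv : v ∈ sandwich (tower n j) (B j)) :
    g * v ∈ sandwich (tower n j) (B j) := by
  rw [← hij] at hv ⊢
  have h : Nat.dist i j = 1 := by unfold Nat.dist; omega
  have hT : T i ∈ tower n (i + 1) := T_mem_tower (Nat.lt_succ_self i)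
  have hE : E i ∈ tower n (i + 1) := E_mem_tower (Nat.lt_succ_self i)
  have hcomm {p : En n} (hp : p ∈ tower n i) := commute_of_mem_tower (by omega : (i : ℕ) < j) hp
  refine mul_mem_sandwich_of_forall (fun a ha w hw => ?_) hv
  refine mul_mul_mem_sandwich_of_commute htower.le (tower_mono (Nat.le_succ i)) ?_
    (fun p hp w hw => commute_of_mem_B (hcomm hp).1.symm (hcomm hp).2.symm hw)
    (fun y hy w hw => ?_) ha hw <;> rcases hg with rfl | rfl
  · exact fun p hp => (hcomm hp).1
  · exact fun p hp => (hcomm hp).2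
  · rw [← mul_assoc]; exact T_mul_mul_mem h hT hE hy hw
  · rw [← mul_assoc]; exact E_mul_mul_mem h hT hE hy hw

theorem toSubmodule_tower_succ_of_mul_mem
    (hmul : ∀ g : En n, (g = T j ∨ g = E j) →
      ∀ v ∈ sandwich (tower n j) (B j), g * v ∈ sandwich (tower n j) (B j)) :
    Subalgebra.toSubmodule (tower n (j + 1)) = sandwich (tower n j) (B j) := by
  refine le_antisymm
    (Algebra.toSubmodule_adjoin_le_of_mul_mem (mem_sandwich_of_mem (one_mem_B j)) ?_) ?_
  · rintro g ⟨k, hk, hg⟩ v hv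
    rcases Nat.lt_succ_iff_lt_or_eq.1 hk with hk | hk
    · refine mul_mem_sandwich_left ?_ hv
      rcases hg with rfl | rfl
      exacts [T_mem_tower hk, E_mem_tower hk]
    · exact hmul g (Fin.ext hk ▸ hg) v hv
  · refine sandwich_le (tower_mono (Nat.le_succ j)) (Submodule.span_le.2 ?_)
    have hT : T j ∈ tower n (j + 1) := T_mem_tower (Nat.lt_succ_self j)
    have hE : E j ∈ tower n (j + 1) := E_mem_tower (Nat.lt_succ_self j)
    rintro _ (rfl | rfl | rfl | rfl)
    exacts [one_mem (tower n (j + 1)), hT, hE, (mul_mem hE hT : E j * T j ∈ tower n (j + 1))]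

end Step

theorem toSubmodule_tower_succ (m : ℕ) (hm : m < n - 1) :
    Subalgebra.toSubmodule (tower n (m + 1)) = sandwich (tower n m) (B ⟨m, hm⟩) := by
  induction m with
  | zero => exact toSubmodule_tower_succ_of_mul_mem (j := ⟨_, hm⟩) fun g hg v hv =>
      mul_mem_sandwich_tower_zero rfl hg hv
  | succ k ih => exact toSubmodule_tower_succ_of_mul_mem (j := ⟨_, hm⟩) fun g hg v hv =>
      mul_mem_sandwich_tower_succ (i := ⟨k, by omega⟩) rfl (ih (by omega)) hg hv

theorem fg_toSubmodule_tower (m : ℕ) (hm : m ≤ n - 1) :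
    (Subalgebra.toSubmodule (tower n m)).FG := by
  induction m with
  | zero => rw [tower_zero]; exact Subalgebra.fg_bot_toSubmodule
  | succ k ih =>
    rw [toSubmodule_tower_succ k (by omega)]
    exact ((ih (by omega)).mul (Submodule.fg_span (Set.toFinite _))).mul (ih (by omega))

end En

theorem stmt3_general (n : ℕ) : FiniteDimensional K (En n) := by
  have h := En.fg_toSubmodule_tower (n := n) (n - 1) le_rfl
  rw [En.tower_eq_top, Algebra.top_toSubmodule] at h
  exact Module.finite_def.mpr h

/-- The algebra `ℰ_n(u)` is finite dimensional over `K = ℂ(u)`. -/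
theorem stmt3 (n : ℕ) (hn : 2 ≤ n) : FiniteDimensional K (En n) :=
  stmt3_general n
end
end

section
/- The set {1, T_1, E_1, T_1E_1} is a basis of ℰ_2(u) as a K-vector space; in particular ℰ_2(u) has dimension 4 over K = ℂ(u). -/
noncomputable section

open FreeAlgebra

/-! The span of `1, T, E, TE` contains `1` and is stable under left multiplication by the
generators `T` and `E` (the defining relations rewrite every product back into it), so it is
everything. For independence, map `ℰ_2(u)` to `K⁴` by its four characters; the images of the
four elements are independent because `2 ≠ 0` and `1 + u⁻¹ ≠ 0` in `ℂ(u)`. -/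

theorem Submodule.eq_top_of_one_mem_of_mul_mem {R A : Type*} [CommSemiring R] [Semiring A]
    [Algebra R A] {s : Set A} (hs : Algebra.adjoin R s = ⊤) {M : Submodule R A} (h_one : 1 ∈ M)
    (h_mul : ∀ g ∈ s, ∀ m ∈ M, g * m ∈ M) : M = ⊤ := by
  have h_adjoin : ∀ a ∈ Algebra.adjoin R s, ∀ m ∈ M, a * m ∈ M := fun a ha => by
    induction ha using Algebra.adjoin_induction with
    | mem g hg => exact h_mul g hg
    | algebraMap r => intro m hm; rw [← Algebra.smul_def]; exact M.smul_mem r hm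
    | add a b _ _ ha hb => intro m hm; rw [add_mul]; exact add_mem (ha m hm) (hb m hm)
    | mul a b _ _ ha hb => intro m hm; rw [mul_assoc]; exact ha _ (hb m hm)
  refine Submodule.eq_top_iff'.2 fun a => ?_
  simpa using h_adjoin a (hs ▸ Algebra.mem_top) 1 h_one

theorem En.adjoin_range_T_union_range_E (n : ℕ) :
    Algebra.adjoin K (Set.range (T (n := n)) ∪ Set.range (E (n := n))) = ⊤ := by
  have himage : RingQuot.mkAlgHom K (EnRel n) '' Set.range (FreeAlgebra.ι K) =
      Set.range (T (n := n)) ∪ Set.range (E (n := n)) := by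
    ext x
    simp only [Set.mem_image, Set.mem_range, Set.mem_union]
    constructor
    · rintro ⟨_, ⟨g | g, rfl⟩, rfl⟩
      exacts [Or.inl ⟨g, rfl⟩, Or.inr ⟨g, rfl⟩]
    · rintro (⟨g, rfl⟩ | ⟨g, rfl⟩)
      exacts [⟨_, ⟨Gen.T g, rfl⟩, rfl⟩, ⟨_, ⟨Gen.E g, rfl⟩, rfl⟩]
  rw [← himage, Algebra.adjoin_image, FreeAlgebra.adjoin_range_ι, Algebra.map_top,
    AlgHom.range_eq_top]
  exact RingQuot.mkAlgHom_surjective K (EnRel n)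

namespace En2

theorem E_mul_E : (E 0 : En 2) * E 0 = E 0 := by
  simpa [E] using RingQuot.mkAlgHom_rel K (EnRel.Eidem (n := 2) 0)

theorem E_mul_T : (E 0 : En 2) * T 0 = T 0 * E 0 := by
  simpa [E, T] using RingQuot.mkAlgHom_rel K (EnRel.ET (n := 2) 0)

theorem T_mul_T : (T 0 : En 2) * T 0 = 1 + (u⁻¹ - 1) • (E 0 - T 0 * E 0) := by
  have h := RingQuot.mkAlgHom_rel K (EnRel.Tsq (n := 2) 0)
  simp only [map_mul, map_add, map_one, map_smul, map_sub] at h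
  rw [← E_mul_T, ← mul_one_sub]
  exact h

theorem T_mul_T_mul_E : (T 0 : En 2) * (T 0 * E 0) = E 0 + (u⁻¹ - 1) • (E 0 - T 0 * E 0) := by
  rw [← mul_assoc, T_mul_T, add_mul, one_mul, smul_mul_assoc, sub_mul, E_mul_E, mul_assoc,
    E_mul_E]

theorem E_mul_T_mul_E : (E 0 : En 2) * (T 0 * E 0) = T 0 * E 0 := by
  rw [← mul_assoc, E_mul_T, mul_assoc, E_mul_E]

section lift

variable {A : Type*} [Ring A] [Algebra K A] (t e : A) (he : e * e = e) (het : e * t = t * e)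
  (ht : t * t = 1 + (u⁻¹ - 1) • (e * (1 - t)))

def lift : En 2 →ₐ[K] A :=
  RingQuot.liftAlgHom K ⟨FreeAlgebra.lift K fun | .T _ => t | .E _ => e, fun x y h => by
    induction h with
    | TTfar h | braid h | ETfar h | ETT h | EET h | ETE h =>
      simp [Subsingleton.elim _ (0 : Fin 1)] at h
    | Eidem => simpa [fE] using he
    | EE => simp [fE]
    | ET => simpa [fE, fT] using het
    | Tsq => simpa [fE, fT] using ht⟩

theorem lift_T : lift t e he het ht (T 0) = t := by
  simp [lift, T, fT]

theorem lift_E : lift t e he het ht (E 0) = e := by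
  simp [lift, E, fE]

end lift

/-- `E ↦ 0` forces `T ↦ ±1`, and `E ↦ 1` turns the quadratic relation into
`(T - 1)(T + u⁻¹) = 0`. -/
def characters : En 2 →ₐ[K] (Fin 4 → K) :=
  lift ![1, -1, 1, -u⁻¹] ![0, 0, 1, 1]
    (by ext k; fin_cases k <;> simp)
    (mul_comm _ _)
    (by ext k; fin_cases k <;> simp [Matrix.vecHead, Matrix.vecTail]; ring)

def basisFamily : Fin 4 → En 2 := ![1, T 0, E 0, T 0 * E 0]

theorem span_basisFamily : Submodule.span K (Set.range basisFamily) = ⊤ := by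
  set M := Submodule.span K (Set.range basisFamily)
  have mem (i : Fin 4) : basisFamily i ∈ M := Submodule.subset_span ⟨i, rfl⟩
  have quadratic_mem {x : En 2} (hx : x ∈ M) : x + (u⁻¹ - 1) • (E 0 - T 0 * E 0) ∈ M :=
    add_mem hx (M.smul_mem _ (sub_mem (mem 2) (mem 3)))
  refine Submodule.eq_top_of_one_mem_of_mul_mem (En.adjoin_range_T_union_range_E 2) (mem 0) ?_
  rintro g (⟨j, rfl⟩ | ⟨j, rfl⟩) m hm <;>
    obtain rfl : j = 0 := Subsingleton.elim (α := Fin 1) j 0 <;>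
    refine Submodule.span_le (p := M.comap (LinearMap.mulLeft K _)).2 ?_ hm <;>
    rintro _ ⟨i, rfl⟩ <;> fin_cases i
  · simpa [basisFamily] using mem 1
  · simpa [basisFamily, T_mul_T] using quadratic_mem (mem 0)
  · simpa [basisFamily] using mem 3
  · simpa [basisFamily, T_mul_T_mul_E] using quadratic_mem (mem 2)
  · simpa [basisFamily] using mem 2
  · simpa [basisFamily, E_mul_T] using mem 3
  · simpa [basisFamily, E_mul_E] using mem 2
  · simpa [basisFamily, E_mul_T_mul_E] using mem 3

theorem one_add_u_inv_ne_zero : 1 + u⁻¹ ≠ 0 := by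
  have hu : u ≠ 0 := RatFunc.X_ne_zero
  have hu1 : u + 1 ≠ 0 := by
    have : u + 1 = algebraMap (Polynomial ℂ) K (Polynomial.X + Polynomial.C 1) := by simp [u]
    rw [this, map_ne_zero_iff _ (RatFunc.algebraMap_injective ℂ)]
    exact Polynomial.X_add_C_ne_zero 1
  rw [show 1 + u⁻¹ = u⁻¹ * (u + 1) by field_simp]
  exact mul_ne_zero (inv_ne_zero hu) hu1

theorem linearIndependent_basisFamily : LinearIndependent K basisFamily := by
  refine LinearIndependent.of_comp characters.toLinearMap ?_
  refine Fintype.linearIndependent_iff.2 fun c hc => ?_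
  have h := congrFun hc
  have h0 := h 0; have h1 := h 1; have h2 := h 2; have h3 := h 3
  simp only [characters, AlgHom.coe_toLinearMap, basisFamily, Function.comp_apply,
    Finset.sum_apply, Pi.smul_apply, smul_eq_mul, Fin.sum_univ_four, Matrix.cons_val_zero, map_one,
    Pi.one_apply, mul_one, Matrix.cons_val_one, lift_T, Matrix.cons_val, lift_E, mul_zero,
    add_zero, map_mul, Pi.mul_apply, Pi.zero_apply, mul_neg] at h0 h1 h2 h3
  have hc0 : c 0 = 0 := by
    simpa using (by linear_combination h0 + h1 : (2 : K) * c 0 = 0)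
  have hc1 : c 1 = 0 := by
    simpa using (by linear_combination h0 - h1 : (2 : K) * c 1 = 0)
  have hc3 : c 3 = 0 := by
    have : (1 + u⁻¹) * c 3 = 0 := by linear_combination h2 - h3 - (1 + u⁻¹) * hc1
    exact (mul_eq_zero.1 this).resolve_left one_add_u_inv_ne_zero
  have hc2 : c 2 = 0 := by linear_combination h2 - hc0 - hc1 - hc3
  intro i
  fin_cases i <;> assumption

end En2

/-- `{1, T_1, E_1, T_1 E_1}` is a `K`-basis of `ℰ_2(u)`; in particular
`ℰ_2(u)` has dimension 4 over `K = ℂ(u)`. -/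
theorem stmt5 :
    (∃ B : Module.Basis (Fin 4) K (En 2),
      B 0 = 1 ∧ B 1 = T 0 ∧ B 2 = E 0 ∧ B 3 = T 0 * E 0) ∧
    Module.finrank K (En 2) = 4 := by
  let B := Module.Basis.mk En2.linearIndependent_basisFamily En2.span_basisFamily.ge
  refine ⟨⟨B, ?_, ?_, ?_, ?_⟩, by simp [Module.finrank_eq_card_basis B]⟩ <;>
    simp [B, En2.basisFamily]
end
end

section
/- In ℰ_n(u), for all i, j with |i−j| = 1, writing T_k⁻¹ := T_k + (u−1)E_kT_k + (1−u)E_k, one has T_i⁻¹E_jT_i = T_jE_iT_j⁻¹. -/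
/-!
Relation (7) says `E_j (T_i T_j) = (T_i T_j) E_i`; conjugating it by `T_i⁻¹` on the left and
`T_j⁻¹` on the right gives the claim, so everything rests on `T_k⁻¹` being a two-sided inverse.
With `X_k := E_k (1 - T_k)`, relation (9) reads `T_k² = 1 + (u⁻¹ - 1) X_k`, and `E_k² = E_k`,
`E_k T_k = T_k E_k` give `T_k X_k = X_k T_k = -u⁻¹ X_k`. Since `T_k⁻¹ = T_k + (1 - u) X_k`,
both products collapse to `1 + ((u⁻¹ - 1) - (1 - u) u⁻¹) X_k = 1`.
-/

noncomputable section

open FreeAlgebra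

/-- The element `T_k⁻¹ := T_k + (u-1) E_k T_k + (1-u) E_k`, which is a two-sided
inverse of `T_k` in `ℰ_n(u)`. -/
def Tinv {n : ℕ} (k : Fin (n - 1)) : En n :=
  T k + (u - 1) • (E k * T k) + (1 - u) • E k

theorem Units.inv_mul_mul_eq_mul_mul_inv {M : Type*} [Monoid M] (a b : Mˣ) {e f : M}
    (h : e * (a * b) = a * b * f) : ↑a⁻¹ * e * a = b * f * ↑b⁻¹ := by
  rw [Units.eq_mul_inv_iff_mul_eq, mul_assoc, mul_assoc, Units.inv_mul_eq_iff_eq_mul]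
  simpa only [mul_assoc] using h

section QuadraticRelation

variable {R A : Type*} [CommRing R] [Ring A] [Algebra R A] {t e : A} {c : R}

theorem mul_idem_mul_one_sub (he : IsIdempotentElem e) (het : Commute e t)
    (ht : t * t = 1 + c • (e * (1 - t))) :
    t * (e * (1 - t)) = -(1 + c) • (e * (1 - t)) := by
  have hee : e * (c • (e * (1 - t))) = c • (e * (1 - t)) := by
    rw [mul_smul_comm, ← mul_assoc, he.eq]
  calc t * (e * (1 - t)) = e * t - e * (t * t) := by
        rw [← mul_assoc, ← het.eq, mul_sub, mul_one, mul_assoc]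
    _ = -(1 + c) • (e * (1 - t)) := by
        rw [ht, mul_add, mul_one, hee, neg_smul, add_smul, one_smul, mul_sub, mul_one]
        abel

theorem mul_add_smul_idem_mul_one_sub_eq_one (he : IsIdempotentElem e) (het : Commute e t)
    (ht : t * t = 1 + c • (e * (1 - t))) {r : R} (hr : r * (1 + c) = c) :
    t * (t + r • (e * (1 - t))) = 1 := by
  rw [mul_add, ht, mul_smul_comm, mul_idem_mul_one_sub he het ht, smul_smul, add_assoc,
    ← add_smul, mul_neg, hr, add_neg_cancel, zero_smul, add_zero]

theorem add_smul_idem_mul_one_sub_mul_eq_one (he : IsIdempotentElem e) (het : Commute e t)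
    (ht : t * t = 1 + c • (e * (1 - t))) {r : R} (hr : r * (1 + c) = c) :
    (t + r • (e * (1 - t))) * t = 1 := by
  have hcomm : Commute t (t + r • (e * (1 - t))) :=
    (Commute.refl t).add_right
      ((het.symm.mul_right ((Commute.one_right t).sub_right (Commute.refl t))).smul_right r)
  rw [← hcomm.eq, mul_add_smul_idem_mul_one_sub_eq_one he het ht hr]

end QuadraticRelation

section Relations

variable {n : ℕ}

theorem isIdempotentElem_E (k : Fin (n - 1)) : IsIdempotentElem (E k) := by
  show E k * E k = E k
  simpa only [E, map_mul] using RingQuot.mkAlgHom_rel K (EnRel.Eidem k)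

theorem commute_E_T (k : Fin (n - 1)) : Commute (E k) (T k) := by
  show E k * T k = T k * E k
  simpa only [T, E, map_mul] using RingQuot.mkAlgHom_rel K (EnRel.ET k)

theorem T_mul_T (k : Fin (n - 1)) : T k * T k = 1 + (u⁻¹ - 1) • (E k * (1 - T k)) := by
  simpa only [T, E, map_mul, map_add, map_sub, map_one, map_smul]
    using RingQuot.mkAlgHom_rel K (EnRel.Tsq k)

theorem E_mul_T_mul_T {i j : Fin (n - 1)} (hij : Nat.dist i j = 1) :
    E j * (T i * T j) = T i * T j * E i := by
  simpa only [T, E, map_mul] using RingQuot.mkAlgHom_rel K (EnRel.ETT hij)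

end Relations

section Inverse

variable {n : ℕ}

theorem Tinv_eq (k : Fin (n - 1)) : Tinv k = T k + (1 - u) • (E k * (1 - T k)) := by
  rw [Tinv, mul_sub, mul_one, (commute_E_T k).eq, smul_sub, ← neg_sub (1 : K) u,
    neg_smul (R := K) (M := En n)]
  abel

theorem one_sub_u_mul_one_add_inv_u_sub_one : (1 - u) * (1 + (u⁻¹ - 1)) = u⁻¹ - 1 := by
  have hu : u ≠ 0 := RatFunc.X_ne_zero
  field_simp
  ring

theorem T_mul_Tinv (k : Fin (n - 1)) : T k * Tinv k = 1 := by
  rw [Tinv_eq]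
  exact mul_add_smul_idem_mul_one_sub_eq_one (isIdempotentElem_E k) (commute_E_T k) (T_mul_T k)
    one_sub_u_mul_one_add_inv_u_sub_one

theorem Tinv_mul_T (k : Fin (n - 1)) : Tinv k * T k = 1 := by
  rw [Tinv_eq]
  exact add_smul_idem_mul_one_sub_mul_eq_one (isIdempotentElem_E k) (commute_E_T k) (T_mul_T k)
    one_sub_u_mul_one_add_inv_u_sub_one

def unitT (k : Fin (n - 1)) : (En n)ˣ := ⟨T k, Tinv k, T_mul_Tinv k, Tinv_mul_T k⟩

end Inverse

theorem stmt8_general (n : ℕ) (i j : Fin (n - 1)) (hij : Nat.dist i j = 1) :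
    Tinv i * E j * T i = T j * E i * Tinv j :=
  Units.inv_mul_mul_eq_mul_mul_inv (unitT i) (unitT j) (E_mul_T_mul_T hij)

/-- For `|i - j| = 1`: `T_i⁻¹ E_j T_i = T_j E_i T_j⁻¹`. -/
theorem stmt8 (n : ℕ) (hn : 2 ≤ n) (i j : Fin (n - 1)) (hij : Nat.dist i j = 1) :
    Tinv i * E j * T i = T j * E i * Tinv j :=
  stmt8_general n i j hij
end
end

section
/- Let a, b ≥ 0 with a + b = n, let α be a representation of S_a on a ℂ-vector space V and β a representation of S_b on a ℂ-vector space V′. Let M_{(α,β)} = Ind_{W_{(a,b)}}^{W_n}(α ⊗ εβ) be the induced W_n-representation, realized as the space of functions f: W_n → V ⊗ V′ satisfying f(hg) = (α ⊗ εβ)(h)·f(g) for all h ∈ W_{(a,b)}, g ∈ W_n, with action (g·f)(x) = f(xg), and let M_{(β,α)} = Ind_{W_{(b,a)}}^{W_n}(β ⊗ εα) be defined analogously. Then there exists a ℂ-linear equivalence Φ: M_{(α,β)} → M_{(β,α)} that intertwines the actions of all the elements s_i and e_i := ½(1 + t_it_{i+1}) of ℂ[W_n], i.e. Φ(s_i·f)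 = s_i·Φ(f) and Φ(e_i·f) = e_i·Φ(f) for all i and all f; in other words, M_{(α,β)} and M_{(β,α)} are isomorphic as ℰ_n(1)-modules. -/
noncomputable section
set_option maxRecDepth 4000

/-- `C_2^n`, written multiplicatively. -/
abbrev C2n (n : ℕ) : Type := Fin n → Multiplicative (ZMod 2)

/-- The permutation action of `S_n` on `C_2^n` by permuting coordinates. -/
def permAct (n : ℕ) : Equiv.Perm (Fin n) →* MulAut (C2n n) where
  toFun σ :=
    { toFun := fun v i => v (σ⁻¹ i)
      invFun := fun v i => v (σ i)
      left_inv := fun v => funext fun i => by simp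
      right_inv := fun v => funext fun i => by simp
      map_mul' := fun v w => rfl }
  map_one' := by
    ext v i
    simp
  map_mul' := fun σ τ => by
    ext v i
    simp [mul_inv_rev]

/-- The hyperoctahedral group `W_n = C_2 ≀ S_n`, realized as the semidirect
product `(ZMod 2)^n ⋊ S_n`. -/
abbrev W (n : ℕ) : Type := C2n n ⋊[permAct n] Equiv.Perm (Fin n)

/-- The element `t_i` of `W_n`: `i`-th standard basis vector, trivial permutation. -/
def tgen (n : ℕ) (i : Fin n) : W n :=
  SemidirectProduct.inl (fun j => if j = i then Multiplicative.ofAdd 1 else 1)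

/-- The element `s_i` of `W_n`: the adjacent transposition `(i, i+1)`, trivial
vector part. -/
def sgen (n : ℕ) (i : ℕ) (h : i + 1 < n) : W n :=
  SemidirectProduct.inr (Equiv.swap ⟨i, by omega⟩ ⟨i + 1, h⟩)

open TensorProduct

/-- The identification `Fin a ⊕ Fin b ≃ Fin n` (blocks `{1,…,a}` and `{a+1,…,n}`). -/
def bEquiv {a b n : ℕ} (h : a + b = n) : (Fin a ⊕ Fin b) ≃ Fin n :=
  finSumFinEquiv.trans (finCongr h)

/-- The element of the subgroup `W_{(a,b)} ⊆ W_n` with vector part `c` and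
block-diagonal permutation part `(σ₁, σ₂)`. -/
def blockElem {a b n : ℕ} (h : a + b = n) (c : C2n n)
    (σ₁ : Equiv.Perm (Fin a)) (σ₂ : Equiv.Perm (Fin b)) : W n :=
  SemidirectProduct.inl c *
    SemidirectProduct.inr ((bEquiv h).permCongr (σ₁.sumCongr σ₂))

/-- The sign `ε(c) = (-1)^(c_{a+1} + ⋯ + c_n)` (sum over the second block). -/
def bsign {a b n : ℕ} (h : a + b = n) (c : C2n n) : ℂ :=
  (-1 : ℂ) ^ (∑ j : Fin b, (Multiplicative.toAdd (c (bEquiv h (Sum.inr j)))).val)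

/-- The induced module `Ind_{W_{(a,b)}}^{W_n} (α ⊗ εβ)`, realized as the space of
functions `f : W_n → V ⊗ V'` with `f(hg) = (α ⊗ εβ)(h) f(g)` for `h ∈ W_{(a,b)}`. -/
def Ind {a b n : ℕ} (h : a + b = n) {V V' : Type} [AddCommGroup V] [Module ℂ V]
    [AddCommGroup V'] [Module ℂ V']
    (α : Representation ℂ (Equiv.Perm (Fin a)) V)
    (β : Representation ℂ (Equiv.Perm (Fin b)) V') :
    Submodule ℂ (W n → V ⊗[ℂ] V') where
  carrier := {f | ∀ (c : C2n n) (σ₁ : Equiv.Perm (Fin a)) (σ₂ : Equiv.Perm (Fin b))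
      (g : W n),
      f (blockElem h c σ₁ σ₂ * g) =
        bsign h c • TensorProduct.map (α σ₁) (β σ₂) (f g)}
  add_mem' := by
    intro f g hf hg c σ₁ σ₂ x
    simp only [Pi.add_apply, hf c σ₁ σ₂ x, hg c σ₁ σ₂ x, map_add, smul_add]
  zero_mem' := by
    intro c σ₁ σ₂ x
    show (0 : V ⊗[ℂ] V') = bsign h c • TensorProduct.map (α σ₁) (β σ₂) 0
    rw [map_zero, smul_zero]
  smul_mem' := by
    intro r f hf c σ₁ σ₂ x
    show r • f (blockElem h c σ₁ σ₂ * x) =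
      bsign h c • TensorProduct.map (α σ₁) (β σ₂) (r • f x)
    rw [hf c σ₁ σ₂ x, map_smul, smul_comm]

/-- Right translation by `w ∈ W_n` on the induced module: `(w ⬝ f)(x) = f(xw)`.
This is the action of the group element `w` on the induced representation. -/
def rT {a b n : ℕ} (h : a + b = n) {V V' : Type} [AddCommGroup V] [Module ℂ V]
    [AddCommGroup V'] [Module ℂ V']
    (α : Representation ℂ (Equiv.Perm (Fin a)) V)
    (β : Representation ℂ (Equiv.Perm (Fin b)) V') (w : W n) :
    ↥(Ind h α β) →ₗ[ℂ] ↥(Ind h α β) where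
  toFun f := ⟨fun x => f.1 (x * w), by
    intro c σ₁ σ₂ x
    show f.1 (blockElem h c σ₁ σ₂ * x * w) = _
    rw [mul_assoc]
    exact f.2 c σ₁ σ₂ (x * w)⟩
  map_add' f g := rfl
  map_smul' r f := rfl

/-!
The total sign `ε(c, σ) = ∏ᵢ (-1)^{cᵢ}` is a linear character of `W_n`. Let `τ` be the
permutation exchanging the two blocks, so that conjugation by `τ` carries `W_{(b,a)}` onto
`W_{(a,b)}`. Then `Φ f (x) = ε(x) · swap (f (τ x))` maps `M_{(α,β)}` to `M_{(β,α)}`: on the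
subgroup, `ε` converts the sign of the second block of `W_{(a,b)}` into that of the second
block of `W_{(b,a)}`. `Φ` is its own inverse up to exchanging the roles of `(α, β)`, and it
commutes with right translation by every `w` with `ε(w) = 1`; this includes each `s_i` and
each `t_i t_{i+1}`, hence each `e_i`.
-/

open TensorProduct SemidirectProduct

namespace Hyperoctahedral

def signC2 : Multiplicative (ZMod 2) →* ℂ where
  toFun z := (-1) ^ (Multiplicative.toAdd z).val
  map_one' := by simp
  map_mul' x y := by
    rw [toAdd_mul, ZMod.val_add, ← neg_one_pow_eq_pow_mod_two, pow_add]

lemma signC2_mul_self (z : Multiplicative (ZMod 2)) : signC2 z * signC2 z = 1 := by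
  change (-1 : ℂ) ^ _ * (-1) ^ _ = 1
  rw [← pow_add, ← two_mul, pow_mul, neg_one_sq, one_pow]

def vecSign (n : ℕ) : C2n n →* ℂ where
  toFun c := ∏ i, signC2 (c i)
  map_one' := by simp
  map_mul' c d := by simp only [Pi.mul_apply, map_mul, Finset.prod_mul_distrib]

lemma vecSign_apply {n : ℕ} (c : C2n n) : vecSign n c = ∏ i, signC2 (c i) := rfl

lemma vecSign_mul_self {n : ℕ} (c : C2n n) : vecSign n c * vecSign n c = 1 := by
  simp only [vecSign_apply, ← Finset.prod_mul_distrib, signC2_mul_self, Finset.prod_const_one]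

lemma vecSign_permAct {n : ℕ} (σ : Equiv.Perm (Fin n)) (c : C2n n) :
    vecSign n (permAct n σ c) = vecSign n c :=
  Equiv.prod_comp σ⁻¹ fun i => signC2 (c i)

def wSign (n : ℕ) : W n →* ℂ where
  toFun w := vecSign n w.left
  map_one' := map_one _
  map_mul' v w := by rw [mul_left, map_mul, vecSign_permAct]

lemma wSign_mul_self {n : ℕ} (w : W n) : wSign n w * wSign n w = 1 :=
  vecSign_mul_self w.left

lemma wSign_inl {n : ℕ} (c : C2n n) : wSign n (inl c) = vecSign n c := rfl

lemma wSign_inr {n : ℕ} (σ : Equiv.Perm (Fin n)) : wSign n (inr σ) = 1 := map_one (vecSign n)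

lemma wSign_tgen {n : ℕ} (i : Fin n) : wSign n (tgen n i) = -1 := by
  have hsign (j : Fin n) :
      signC2 (if j = i then Multiplicative.ofAdd 1 else 1) = if j = i then -1 else 1 := by
    split_ifs
    · exact pow_one (-1 : ℂ)
    · exact map_one _
  simp only [tgen, wSign_inl, vecSign_apply, hsign, Finset.prod_ite_eq', Finset.mem_univ,
    if_true]

lemma wSign_blockElem {a b n : ℕ} (h : a + b = n) (c : C2n n)
    (σ₁ : Equiv.Perm (Fin a)) (σ₂ : Equiv.Perm (Fin b)) :
    wSign n (blockElem h c σ₁ σ₂) = vecSign n c := by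
  rw [blockElem, map_mul, wSign_inr, mul_one, wSign_inl]

lemma bsign_eq_prod {a b n : ℕ} (h : a + b = n) (c : C2n n) :
    bsign h c = ∏ j : Fin b, signC2 (c (bEquiv h (Sum.inr j))) :=
  (Finset.prod_pow_eq_pow_sum _ _ _).symm

lemma vecSign_eq_mul_bsign {a b n : ℕ} (h : a + b = n) (c : C2n n) :
    vecSign n c = (∏ j : Fin a, signC2 (c (bEquiv h (Sum.inl j)))) * bsign h c := by
  rw [vecSign_apply, ← Equiv.prod_comp (bEquiv h), Fintype.prod_sum_type, bsign_eq_prod]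

section BlockSwap

variable {a b n : ℕ} (hab : a + b = n) (hba : b + a = n)

def blockSwap : Equiv.Perm (Fin n) :=
  (bEquiv hba).symm.trans ((Equiv.sumComm (Fin b) (Fin a)).trans (bEquiv hab))

lemma blockSwap_bEquiv_inl (j : Fin b) :
    blockSwap hab hba (bEquiv hba (Sum.inl j)) = bEquiv hab (Sum.inr j) := by
  simp [blockSwap]

lemma blockSwap_mul_blockSwap : blockSwap hab hba * blockSwap hba hab = 1 := by
  ext i
  simp [blockSwap, Equiv.Perm.mul_apply]

lemma bsign_permAct_blockSwap (c : C2n n) :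
    bsign hab (permAct n (blockSwap hab hba) c) =
      ∏ j : Fin b, signC2 (c (bEquiv hba (Sum.inl j))) := by
  rw [bsign_eq_prod]
  refine Finset.prod_congr rfl fun j _ => congrArg signC2 (congrArg c ?_)
  rw [Equiv.Perm.inv_def, Equiv.symm_apply_eq, blockSwap_bEquiv_inl]

lemma vecSign_mul_bsign_permAct_blockSwap (c : C2n n) :
    vecSign n c * bsign hab (permAct n (blockSwap hab hba) c) = bsign hba c := by
  rw [vecSign_eq_mul_bsign hba, bsign_permAct_blockSwap, mul_right_comm,
    ← Finset.prod_mul_distrib]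
  simp only [signC2_mul_self, Finset.prod_const_one, one_mul]

lemma blockSwap_mul_permCongr (σ₁ : Equiv.Perm (Fin a)) (σ₂ : Equiv.Perm (Fin b)) :
    blockSwap hab hba * (bEquiv hba).permCongr (σ₂.sumCongr σ₁) =
      (bEquiv hab).permCongr (σ₁.sumCongr σ₂) * blockSwap hab hba := by
  ext i
  obtain ⟨s, rfl⟩ := (bEquiv hba).surjective i
  cases s <;> simp [blockSwap, Equiv.Perm.mul_apply, Equiv.permCongr_apply]

lemma inr_blockSwap_mul_blockElem (c : C2n n)
    (σ₁ : Equiv.Perm (Fin a)) (σ₂ : Equiv.Perm (Fin b)) :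
    inr (blockSwap hab hba) * blockElem hba c σ₂ σ₁ =
      blockElem hab (permAct n (blockSwap hab hba) c) σ₁ σ₂ * inr (blockSwap hab hba) := by
  rw [blockElem, blockElem, inl_aut, mul_assoc, mul_assoc, mul_assoc, ← map_mul, ← map_mul,
    ← blockSwap_mul_permCongr, inv_mul_cancel_left]

end BlockSwap

section SwapInd

variable {a b n : ℕ} (hab : a + b = n) (hba : b + a = n)
  {V V' : Type} [AddCommGroup V] [Module ℂ V] [AddCommGroup V'] [Module ℂ V']
  (α : Representation ℂ (Equiv.Perm (Fin a)) V)
  (β : Representation ℂ (Equiv.Perm (Fin b)) V')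

lemma rT_apply (w : W n) (f : Ind hab α β) (x : W n) : (rT hab α β w f).1 x = f.1 (x * w) := rfl

lemma swapInd_mem (f : Ind hab α β) :
    (fun x => wSign n x • TensorProduct.comm ℂ V V' (f.1 (inr (blockSwap hab hba) * x))) ∈
      Ind hba β α := by
  intro c σ₁ σ₂ x
  dsimp only
  rw [← mul_assoc, inr_blockSwap_mul_blockElem, mul_assoc, f.2, map_mul, wSign_blockElem,
    map_smul, ← map_comm, map_smul, smul_smul, smul_smul, mul_assoc, mul_comm (wSign n x),
    ← mul_assoc, vecSign_mul_bsign_permAct_blockSwap]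

def swapInd : Ind hab α β →ₗ[ℂ] Ind hba β α where
  toFun f := ⟨_, swapInd_mem hab hba α β f⟩
  map_add' f g := Subtype.ext <| funext fun x => by
    simp only [Submodule.coe_add, Pi.add_apply, map_add, smul_add]
  map_smul' r f := Subtype.ext <| funext fun x => by
    simp only [SetLike.val_smul, Pi.smul_apply, map_smul, RingHom.id_apply, smul_comm r]

lemma swapInd_apply (f : Ind hab α β) (x : W n) :
    (swapInd hab hba α β f).1 x =
      wSign n x • TensorProduct.comm ℂ V V' (f.1 (inr (blockSwap hab hba) * x)) := rfl

lemma swapInd_swapInd (f : Ind hab α β) : swapInd hba hab β α (swapInd hab hba α β f) = f :=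
  Subtype.ext <| funext fun x => by
    rw [swapInd_apply, swapInd_apply, ← mul_assoc, ← map_mul, blockSwap_mul_blockSwap, map_one,
      one_mul, map_mul, wSign_inr, one_mul, map_smul, comm_comm, smul_smul, wSign_mul_self,
      one_smul]

def swapIndEquiv : Ind hab α β ≃ₗ[ℂ] Ind hba β α where
  __ := swapInd hab hba α β
  invFun := swapInd hba hab β α
  left_inv := swapInd_swapInd hab hba α β
  right_inv := swapInd_swapInd hba hab β α

lemma swapIndEquiv_rT {w : W n} (hw : wSign n w = 1) (f : Ind hab α β) :
    swapIndEquiv hab hba α β (rT hab α β w f) = rT hba β α w (swapIndEquiv hab hba α β f) :=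
  Subtype.ext <| funext fun x => by
    change (swapInd hab hba α β (rT hab α β w f)).1 x = (swapInd hab hba α β f).1 (x * w)
    rw [swapInd_apply, swapInd_apply, map_mul, hw, mul_one, rT_apply, mul_assoc]

end SwapInd

end Hyperoctahedral

open Hyperoctahedral in
/-- The induced modules `V_{(α,β)} = Ind_{W_{(a,b)}}^{W_n}(α ⊗ εβ)` and
`V_{(β,α)} = Ind_{W_{(b,a)}}^{W_n}(β ⊗ εα)` are isomorphic as `ℰ_n(1)`-modules:
there is a `ℂ`-linear equivalence intertwining the actions of all `s_i` and all
`e_i = ½(1 + t_i t_{i+1})`. -/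
theorem stmt16 (n a b : ℕ) (hab : a + b = n) (hba : b + a = n)
    {V V' : Type} [AddCommGroup V] [Module ℂ V] [AddCommGroup V'] [Module ℂ V']
    (α : Representation ℂ (Equiv.Perm (Fin a)) V)
    (β : Representation ℂ (Equiv.Perm (Fin b)) V') :
    ∃ Φ : ↥(Ind hab α β) ≃ₗ[ℂ] ↥(Ind hba β α),
      (∀ (i : ℕ) (hi : i + 1 < n) (f : ↥(Ind hab α β)),
        Φ (rT hab α β (sgen n i hi) f) = rT hba β α (sgen n i hi) (Φ f)) ∧
      (∀ (i : ℕ) (hi : i + 1 < n) (f : ↥(Ind hab α β)),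
        Φ ((2⁻¹ : ℂ) •
            (f + rT hab α β (tgen n ⟨i, by omega⟩ * tgen n ⟨i + 1, hi⟩) f)) =
          (2⁻¹ : ℂ) •
            (Φ f + rT hba β α (tgen n ⟨i, by omega⟩ * tgen n ⟨i + 1, hi⟩) (Φ f))) := by
  refine ⟨swapIndEquiv hab hba α β, fun i hi f => ?_, fun i hi f => ?_⟩
  · exact swapIndEquiv_rT hab hba α β (wSign_inr _) f
  · have htt : wSign n (tgen n ⟨i, by omega⟩ * tgen n ⟨i + 1, hi⟩) = 1 := by
      rw [map_mul, wSign_tgen, wSign_tgen, neg_one_mul, neg_neg]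
    rw [map_smul, map_add, swapIndEquiv_rT hab hba α β htt]
end
end

section
/- Let n = 2m with m ≥ 1 and let α be a representation of S_m on a nonzero ℂ-vector space V. Let M = Ind_{W_{(m,m)}}^{W_n}(α ⊗ εα) be the induced W_n-representation, realized as the space of functions f: W_n → V ⊗ V satisfying f(hg) = (α ⊗ εα)(h)·f(g) for all h ∈ W_{(m,m)}, g ∈ W_n, with action (g·f)(x) = f(xg). Then M decomposes as an internal direct sum M = M⁺ ⊕ M⁻ of two nonzero ℂ-subspaces, each of which is stable under the action of every s_i and of every e_i := ½(1 + t_it_{i+1}); i.e. M is reducible as an ℰ_n(1)-module. -/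
noncomputable section
set_option maxRecDepth 4000

open TensorProduct

/-! Let `τ ∈ S_{2m}` exchange the two blocks and let `χ = flipSign` be the linear character of
`W_{2m}` with `χ(t_i) = -1` that is trivial on `S_{2m}`. Conjugation by `τ` preserves `W_{(m,m)}`,
swapping `σ₁, σ₂` and moving the signed block of `c`; as `ε(τ c τ⁻¹) ε(c) = χ(c)`, the map
`f ↦ (x ↦ χ(x) • comm (f (τ x)))`, with `comm : V ⊗ V' ≃ V' ⊗ V`, sends `Ind(α ⊗ εβ)` to
`Ind(β ⊗ εα)`. For `β = α` it is an involution `T` of `M` commuting with right translation by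
every element of `ker χ`, in particular by `s_i` and `t_i t_{i+1}`, so its `±1`-eigenspaces are
stable under all `s_i` and `e_i`. They are nonzero: the function `F` supported on `W_{(m,m)}` with
`F(1) = v ⊗ v` vanishes at `τ`, so `F ± T F` takes the value `v ⊗ v ≠ 0` at `1`. -/

open SemidirectProduct TensorProduct Module.End

namespace Module.End

variable {R M : Type*} [CommRing R] [AddCommGroup M] [Module R M] {T : Module.End R M}

lemma isCompl_eigenspace_one_neg_one {K : Type*} [Field K] [NeZero (2 : K)] [Module K M]
    {T : Module.End K M} (hT : Function.Involutive T) :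
    IsCompl (T.eigenspace 1) (T.eigenspace (-1)) := by
  constructor
  · rw [Submodule.disjoint_def]
    intro x hx hx'
    rw [mem_eigenspace_iff] at hx hx'
    have h2x : (2 : K) • x = 0 := by
      rw [show (2 : K) = 1 - -1 by norm_num, sub_smul, ← hx, ← hx', sub_self]
    exact (smul_eq_zero.mp h2x).resolve_left two_ne_zero
  · rw [codisjoint_iff_le_sup]
    intro x _
    refine Submodule.mem_sup.mpr ⟨(2⁻¹ : K) • (x + T x), ?_, (2⁻¹ : K) • (x - T x), ?_, ?_⟩
    · rw [mem_eigenspace_iff, map_smul, map_add, hT, one_smul, add_comm]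
    · rw [mem_eigenspace_iff, map_smul, map_sub, hT, neg_one_smul, ← smul_neg, neg_sub]
    · rw [← smul_add, add_add_sub_cancel, ← two_smul K, smul_smul, inv_mul_cancel₀ two_ne_zero,
        one_smul]

lemma eigenspace_one_ne_bot (hT : Function.Involutive T) {x : M} (hx : x + T x ≠ 0) :
    T.eigenspace 1 ≠ ⊥ :=
  (Submodule.ne_bot_iff _).mpr ⟨x + T x, by
    rw [mem_eigenspace_iff, map_add, hT x, one_smul, add_comm], hx⟩

lemma eigenspace_neg_one_ne_bot (hT : Function.Involutive T) {x : M} (hx : x - T x ≠ 0) :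
    T.eigenspace (-1) ≠ ⊥ :=
  (Submodule.ne_bot_iff _).mpr ⟨x - T x, by
    rw [mem_eigenspace_iff, map_sub, hT x, neg_one_smul, neg_sub], hx⟩

end Module.End

lemma TensorProduct.tmul_ne_zero {K V V' : Type*} [Field K] [AddCommGroup V] [Module K V]
    [AddCommGroup V'] [Module K V'] {v : V} {v' : V'} (hv : v ≠ 0) (hv' : v' ≠ 0) :
    v ⊗ₜ[K] v' ≠ 0 := by
  obtain ⟨φ, hφ⟩ : ∃ φ : Module.Dual K V, φ v ≠ 0 := by
    by_contra! h; exact hv ((Module.forall_dual_apply_eq_zero_iff K v).mp h)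
  obtain ⟨ψ, hψ⟩ : ∃ ψ : Module.Dual K V', ψ v' ≠ 0 := by
    by_contra! h; exact hv' ((Module.forall_dual_apply_eq_zero_iff K v').mp h)
  intro h
  have := congrArg (fun z => TensorProduct.lid K K (TensorProduct.map φ ψ z)) h
  simp only [map_tmul, lid_tmul, smul_eq_mul, map_zero] at this
  exact mul_ne_zero hφ hψ this

def zmodTwoSign : Multiplicative (ZMod 2) →* ℂ where
  toFun a := (-1) ^ (Multiplicative.toAdd a).val
  map_one' := by simp
  map_mul' a b := by
    rw [toAdd_mul, ZMod.val_add, ← neg_one_pow_eq_pow_mod_two, pow_add]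

lemma zmodTwoSign_mul_self (a : Multiplicative (ZMod 2)) : zmodTwoSign a * zmodTwoSign a = 1 := by
  simp only [zmodTwoSign, MonoidHom.coe_mk, OneHom.coe_mk, ← mul_pow]
  norm_num

lemma prod_zmodTwoSign_permAct {n : ℕ} (σ : Equiv.Perm (Fin n)) (c : C2n n) :
    ∏ j, zmodTwoSign (permAct n σ c j) = ∏ j, zmodTwoSign (c j) :=
  Equiv.prod_comp σ⁻¹ (fun j => zmodTwoSign (c j))

def flipSign (n : ℕ) : W n →* ℂ where
  toFun x := ∏ j, zmodTwoSign (x.left j)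
  map_one' := by simp
  map_mul' x y := by
    simp only [mul_left, Pi.mul_apply, map_mul, Finset.prod_mul_distrib,
      prod_zmodTwoSign_permAct]

lemma flipSign_mul_self {n : ℕ} (x : W n) : flipSign n x * flipSign n x = 1 := by
  simp only [flipSign, MonoidHom.coe_mk, OneHom.coe_mk, ← Finset.prod_mul_distrib,
    zmodTwoSign_mul_self, Finset.prod_const_one]

lemma flipSign_inr {n : ℕ} (σ : Equiv.Perm (Fin n)) : flipSign n (inr σ) = 1 := by
  simp [flipSign]

lemma flipSign_inl {n : ℕ} (c : C2n n) : flipSign n (inl c) = ∏ j, zmodTwoSign (c j) := by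
  simp [flipSign]

lemma flipSign_tgen {n : ℕ} (i : Fin n) : flipSign n (tgen n i) = -1 := by
  rw [tgen, flipSign_inl, Finset.prod_eq_single i]
  · rw [if_pos rfl]; exact pow_one (-1 : ℂ)
  · intro j _ hj; simp [hj]
  · simp

lemma flipSign_sgen {n : ℕ} (i : ℕ) (hi : i + 1 < n) : flipSign n (sgen n i hi) = 1 :=
  flipSign_inr _

lemma flipSign_tgen_mul_tgen {n : ℕ} (i j : Fin n) : flipSign n (tgen n i * tgen n j) = 1 := by
  rw [map_mul, flipSign_tgen, flipSign_tgen, neg_one_mul, neg_neg]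

lemma bsign_eq_prod {a b n : ℕ} (h : a + b = n) (c : C2n n) :
    bsign h c = ∏ j, zmodTwoSign (c (bEquiv h (Sum.inr j))) :=
  (Finset.prod_pow_eq_pow_sum _ _ _).symm

lemma bsign_mul {a b n : ℕ} (h : a + b = n) (c d : C2n n) :
    bsign h (c * d) = bsign h c * bsign h d := by
  simp only [bsign_eq_prod, Pi.mul_apply, map_mul, Finset.prod_mul_distrib]

lemma bsign_mul_self {a b n : ℕ} (h : a + b = n) (c : C2n n) : bsign h c * bsign h c = 1 := by
  simp only [bsign_eq_prod, ← Finset.prod_mul_distrib, zmodTwoSign_mul_self,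
    Finset.prod_const_one]

section Blocks

variable {a b n : ℕ} (h : a + b = n)

def blockPerm : Equiv.Perm (Fin a) × Equiv.Perm (Fin b) →* Equiv.Perm (Fin n) :=
  ((bEquiv h).permCongrHom : Equiv.Perm (Fin a ⊕ Fin b) →* Equiv.Perm (Fin n)).comp
    (Equiv.Perm.sumCongrHom _ _)

lemma blockPerm_injective : Function.Injective (blockPerm h) :=
  (bEquiv h).permCongrHom.injective.comp Equiv.Perm.sumCongrHom_injective

lemma blockPerm_apply_bEquiv (p : Equiv.Perm (Fin a) × Equiv.Perm (Fin b)) (y : Fin a ⊕ Fin b) :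
    blockPerm h p (bEquiv h y) = bEquiv h (p.1.sumCongr p.2 y) := by
  simp [blockPerm, Equiv.permCongrHom]

lemma blockElem_left (c : C2n n) (σ₁ : Equiv.Perm (Fin a)) (σ₂ : Equiv.Perm (Fin b)) :
    (blockElem h c σ₁ σ₂).left = c := by
  simp [blockElem]

lemma blockElem_right (c : C2n n) (σ₁ : Equiv.Perm (Fin a)) (σ₂ : Equiv.Perm (Fin b)) :
    (blockElem h c σ₁ σ₂).right = blockPerm h (σ₁, σ₂) := by
  simp [blockElem, blockPerm, Equiv.permCongrHom]

lemma bsign_permAct_blockPerm (p : Equiv.Perm (Fin a) × Equiv.Perm (Fin b)) (c : C2n n) :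
    bsign h (permAct n (blockPerm h p) c) = bsign h c := by
  have hinv (j : Fin b) :
      (blockPerm h p)⁻¹ (bEquiv h (Sum.inr j)) = bEquiv h (Sum.inr (p.2⁻¹ j)) := by
    rw [← map_inv, blockPerm_apply_bEquiv]; rfl
  simp only [bsign_eq_prod]
  calc ∏ j, zmodTwoSign (permAct n (blockPerm h p) c (bEquiv h (Sum.inr j)))
      = ∏ j, zmodTwoSign (c (bEquiv h (Sum.inr (p.2⁻¹ j)))) := by simp_rw [← hinv]; rfl
    _ = _ := Equiv.prod_comp p.2⁻¹ (fun j => zmodTwoSign (c (bEquiv h (Sum.inr j))))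

end Blocks

lemma flipSign_blockElem {a b n : ℕ} (h : a + b = n) (c : C2n n) (σ₁ : Equiv.Perm (Fin a))
    (σ₂ : Equiv.Perm (Fin b)) : flipSign n (blockElem h c σ₁ σ₂) = flipSign n (inl c) := by
  rw [blockElem, map_mul, flipSign_inr, mul_one]

section Swap

variable {m n : ℕ} (h : m + m = n)

def blockSwap : Equiv.Perm (Fin n) :=
  (bEquiv h).permCongr (Equiv.sumComm (Fin m) (Fin m))

lemma blockSwap_apply_bEquiv (y : Fin m ⊕ Fin m) :
    blockSwap h (bEquiv h y) = bEquiv h y.swap := by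
  simp [blockSwap]

lemma blockSwap_mul_self : blockSwap h * blockSwap h = 1 := by
  ext x
  obtain ⟨y, rfl⟩ := (bEquiv h).surjective x
  simp [blockSwap_apply_bEquiv]

lemma blockSwap_inv : (blockSwap h)⁻¹ = blockSwap h :=
  inv_eq_of_mul_eq_one_right (blockSwap_mul_self h)

lemma blockSwap_mul_blockPerm (σ₁ σ₂ : Equiv.Perm (Fin m)) :
    blockSwap h * blockPerm h (σ₁, σ₂) = blockPerm h (σ₂, σ₁) * blockSwap h := by
  ext x
  obtain ⟨y | y, rfl⟩ := (bEquiv h).surjective x <;>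
    simp [blockSwap_apply_bEquiv, blockPerm_apply_bEquiv]

lemma blockSwap_notMem_range (hm : 0 < m) : blockSwap h ∉ (blockPerm h).range := by
  rintro ⟨p, hp⟩
  have := congrArg (fun π => π (bEquiv h (Sum.inl ⟨0, hm⟩))) hp
  simp [blockSwap_apply_bEquiv, blockPerm_apply_bEquiv] at this

lemma bsign_permAct_blockSwap_mul_bsign (c : C2n n) :
    bsign h (permAct n (blockSwap h) c) * bsign h c = flipSign n (inl c) := by
  have hswap (j : Fin m) :
      permAct n (blockSwap h) c (bEquiv h (Sum.inr j)) = c (bEquiv h (Sum.inl j)) := by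
    change c ((blockSwap h)⁻¹ _) = _
    rw [blockSwap_inv, blockSwap_apply_bEquiv, Sum.swap_inr]
  rw [flipSign_inl, ← (bEquiv h).prod_comp, Fintype.prod_sum_type, bsign_eq_prod, bsign_eq_prod]
  simp only [hswap]

def blockSwapElem : W n := inr (blockSwap h)

lemma blockSwapElem_mul_self : blockSwapElem h * blockSwapElem h = 1 := by
  rw [blockSwapElem, ← map_mul, blockSwap_mul_self, map_one]

lemma blockSwapElem_mul_blockElem (c : C2n n) (σ₁ σ₂ : Equiv.Perm (Fin m)) :
    blockSwapElem h * blockElem h c σ₁ σ₂ =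
      blockElem h (permAct n (blockSwap h) c) σ₂ σ₁ * blockSwapElem h := by
  ext1
  · simp [blockSwapElem, blockElem]
  · simp only [mul_right, blockSwapElem, right_inr, blockElem_right]
    exact blockSwap_mul_blockPerm h σ₁ σ₂

end Swap

section Induced

variable {m n : ℕ} (h : m + m = n) {V V' : Type} [AddCommGroup V] [Module ℂ V]
  [AddCommGroup V'] [Module ℂ V'] (α : Representation ℂ (Equiv.Perm (Fin m)) V)
  (β : Representation ℂ (Equiv.Perm (Fin m)) V')

def indSwap : Ind h α β →ₗ[ℂ] Ind h β α where
  toFun f := ⟨fun x => flipSign n x • TensorProduct.comm ℂ V V' (f.1 (blockSwapElem h * x)), by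
    intro c σ₁ σ₂ g
    have hsign : flipSign n (inl c) * bsign h (permAct n (blockSwap h) c) = bsign h c := by
      rw [← bsign_permAct_blockSwap_mul_bsign h c, mul_comm, ← mul_assoc, bsign_mul_self, one_mul]
    simp only [← mul_assoc, blockSwapElem_mul_blockElem, map_mul, flipSign_blockElem]
    rw [mul_assoc, f.2, map_smul, ← map_comm, map_smul, smul_smul, smul_smul, mul_right_comm,
      hsign, mul_comm]⟩
  map_add' f g := by
    ext x
    simp [smul_add]
  map_smul' r f := by
    ext x
    simp [smul_comm r]

lemma indSwap_apply (f : Ind h α β) (x : W n) :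
    (indSwap h α β f).1 x = flipSign n x • TensorProduct.comm ℂ V V' (f.1 (blockSwapElem h * x)) :=
  rfl

lemma indSwap_indSwap (f : Ind h α β) : indSwap h β α (indSwap h α β f) = f := by
  ext x
  rw [indSwap_apply, indSwap_apply, ← mul_assoc, blockSwapElem_mul_self, one_mul, map_smul,
    comm_comm, smul_smul, map_mul, blockSwapElem, flipSign_inr, one_mul, flipSign_mul_self,
    one_smul]

lemma indSwap_rT {w : W n} (hw : flipSign n w = 1) (f : Ind h α β) :
    indSwap h α β (rT h α β w f) = rT h β α w (indSwap h α β f) := by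
  ext x
  change _ • _ = flipSign n (x * w) • _
  rw [map_mul, hw, mul_one, ← mul_assoc]
  rfl

end Induced

section Single

variable {a b n : ℕ} (h : a + b = n) {V V' : Type} [AddCommGroup V] [Module ℂ V]
  [AddCommGroup V'] [Module ℂ V'] (α : Representation ℂ (Equiv.Perm (Fin a)) V)
  (β : Representation ℂ (Equiv.Perm (Fin b)) V') (v : V) (v' : V')

def indSingleFun (x : W n) : V ⊗[ℂ] V' :=
  if hx : x.right ∈ (blockPerm h).range then
    let p := (MonoidHom.ofInjective (blockPerm_injective h)).symm ⟨x.right, hx⟩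
    bsign h x.left • TensorProduct.map (α p.1) (β p.2) (v ⊗ₜ v')
  else 0

lemma indSingleFun_of_right_eq {x : W n} {p : Equiv.Perm (Fin a) × Equiv.Perm (Fin b)}
    (hx : x.right = blockPerm h p) :
    indSingleFun h α β v v' x = bsign h x.left • TensorProduct.map (α p.1) (β p.2) (v ⊗ₜ v') := by
  have hmem : x.right ∈ (blockPerm h).range := ⟨p, hx.symm⟩
  have hp : (MonoidHom.ofInjective (blockPerm_injective h)).symm ⟨x.right, hmem⟩ = p :=
    blockPerm_injective h (by rw [MonoidHom.apply_ofInjective_symm]; exact hx)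
  rw [indSingleFun, dif_pos hmem, hp]

lemma indSingleFun_of_right_notMem {x : W n} (hx : x.right ∉ (blockPerm h).range) :
    indSingleFun h α β v v' x = 0 :=
  dif_neg hx

lemma indSingleFun_mem : indSingleFun h α β v v' ∈ Ind h α β := by
  intro c σ₁ σ₂ g
  have hright : (blockElem h c σ₁ σ₂ * g).right = blockPerm h (σ₁, σ₂) * g.right := by
    rw [mul_right, blockElem_right]
  by_cases hg : g.right ∈ (blockPerm h).range
  · obtain ⟨p, hp⟩ := hg
    rw [indSingleFun_of_right_eq h α β v v' (p := (σ₁, σ₂) * p) (by rw [hright, ← hp, map_mul]),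
      indSingleFun_of_right_eq h α β v v' hp.symm, mul_left, blockElem_left, blockElem_right,
      bsign_mul, bsign_permAct_blockPerm, map_smul, mul_smul, Prod.fst_mul, Prod.snd_mul,
      map_mul, map_mul, TensorProduct.map_mul, Module.End.mul_apply]
  · have hg' : (blockElem h c σ₁ σ₂ * g).right ∉ (blockPerm h).range := by
      rwa [hright, Subgroup.mul_mem_cancel_left _ (MonoidHom.mem_range.mpr ⟨(σ₁, σ₂), rfl⟩)]
    rw [indSingleFun_of_right_notMem h α β v v' hg, indSingleFun_of_right_notMem h α β v v' hg',
      map_zero, smul_zero]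

def indSingle : Ind h α β := ⟨indSingleFun h α β v v', indSingleFun_mem h α β v v'⟩

lemma indSingle_one : (indSingle h α β v v').1 1 = v ⊗ₜ v' := by
  change indSingleFun h α β v v' 1 = _
  rw [indSingleFun_of_right_eq h α β v v' (p := 1) (by simp)]
  simp [bsign]

lemma indSingle_of_right_notMem {x : W n} (hx : x.right ∉ (blockPerm h).range) :
    (indSingle h α β v v').1 x = 0 :=
  indSingleFun_of_right_notMem h α β v v' hx

end Single

/-- For `n = 2m` and a representation `α` of `S_m` on a nonzero space `V`, the
induced module `M = Ind_{W_{(m,m)}}^{W_n}(α ⊗ εα)` decomposes as an internal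
direct sum `M = M⁺ ⊕ M⁻` of two nonzero subspaces, each stable under the action
of every `s_i` and every `e_i = ½(1 + t_i t_{i+1})`; i.e. `M` is reducible as an
`ℰ_n(1)`-module. -/
theorem stmt17 (m : ℕ) (hm : 1 ≤ m) (hmm : m + m = 2 * m)
    {V : Type} [AddCommGroup V] [Module ℂ V] [Nontrivial V]
    (α : Representation ℂ (Equiv.Perm (Fin m)) V) :
    ∃ P Q : Submodule ℂ ↥(Ind hmm α α),
      P ≠ ⊥ ∧ Q ≠ ⊥ ∧ IsCompl P Q ∧
      (∀ (i : ℕ) (hi : i + 1 < 2 * m) (f : ↥(Ind hmm α α)),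
        f ∈ P → rT hmm α α (sgen (2 * m) i hi) f ∈ P) ∧
      (∀ (i : ℕ) (hi : i + 1 < 2 * m) (f : ↥(Ind hmm α α)),
        f ∈ Q → rT hmm α α (sgen (2 * m) i hi) f ∈ Q) ∧
      (∀ (i : ℕ) (hi : i + 1 < 2 * m) (f : ↥(Ind hmm α α)),
        f ∈ P → (2⁻¹ : ℂ) •
          (f + rT hmm α α
            (tgen (2 * m) ⟨i, by omega⟩ * tgen (2 * m) ⟨i + 1, hi⟩) f) ∈ P) ∧
      (∀ (i : ℕ) (hi : i + 1 < 2 * m) (f : ↥(Ind hmm α α)),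
        f ∈ Q → (2⁻¹ : ℂ) •
          (f + rT hmm α α
            (tgen (2 * m) ⟨i, by omega⟩ * tgen (2 * m) ⟨i + 1, hi⟩) f) ∈ Q) := by
  set T := indSwap hmm α α
  have hT : Function.Involutive T := indSwap_indSwap hmm α α
  have stable {w : W (2 * m)} (hw : flipSign (2 * m) w = 1) (μ : ℂ) {f : Ind hmm α α}
      (hf : f ∈ eigenspace T μ) : rT hmm α α w f ∈ eigenspace T μ :=
    mapsTo_genEigenspace_of_comm (LinearMap.ext (indSwap_rT hmm α α hw)) μ 1 hf
  obtain ⟨v, hv⟩ := exists_ne (0 : V)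
  set F := indSingle hmm α α v v
  have hF : F.1 1 = v ⊗ₜ v := indSingle_one hmm α α v v
  have hTF : (T F).1 1 = 0 := by
    rw [indSwap_apply, mul_one,
      indSingle_of_right_notMem _ _ _ _ _ (blockSwap_notMem_range hmm hm), map_zero, smul_zero]
  have hF_add : F + T F ≠ 0 := fun h0 =>
    tmul_ne_zero hv hv (by simpa [hF, hTF] using congrArg (·.1 1) h0)
  have hF_sub : F - T F ≠ 0 := fun h0 =>
    tmul_ne_zero hv hv (by simpa [hF, hTF] using congrArg (·.1 1) h0)
  refine ⟨eigenspace T 1, eigenspace T (-1), eigenspace_one_ne_bot hT hF_add,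
    eigenspace_neg_one_ne_bot hT hF_sub, isCompl_eigenspace_one_neg_one hT,
    fun i hi _ => stable (flipSign_sgen i hi) 1, fun i hi _ => stable (flipSign_sgen i hi) (-1),
    fun i hi f hf => ?_, fun i hi f hf => ?_⟩
  · exact Submodule.smul_mem _ _ (add_mem hf (stable (flipSign_tgen_mul_tgen _ _) 1 hf))
  · exact Submodule.smul_mem _ _ (add_mem hf (stable (flipSign_tgen_mul_tgen _ _) (-1) hf))
end
end
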